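/- Let p, q ∈ P_d and let m = p ∧ q be their meet. Then: (i) m ∈ P_d, i.e., m_1 ≥ m_2 ≥ … ≥ m_d ≥ 0 and ∑_{i=1}^d m_i = 1; (ii) m ≺ p and m ≺ q; (iii) for every r ∈ P_d with r ≺ p and r ≺ q, one has r ≺ m. In other words, p ∧ q is the greatest lower bound of {p, q} in (P_d, ≺). -/
import Mathlib


open Finset

noncomputable section

/-- Prefix sum of the first `k` entries of `x` (1-based: `x_1 + ⋯ + x_k`). -/
def pfx (d : ℕ) (x : Fin d → ℝ) (k : ℕ) : ℝ :=
  ∑ i : Fin d, if (i : ℕ) < k then x i else 0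

/-- Tail sum `E_l(x) = ∑_{i=l}^d x_i` for 1-based `l ∈ {1,…,d}`; `E_{d+1}(x) = 0`. -/
def Etail (d : ℕ) (x : Fin d → ℝ) (l : ℕ) : ℝ :=
  ∑ i : Fin d, if l ≤ (i : ℕ) + 1 then x i else 0

/-- Membership in `P_d`: decreasingly ordered, nonnegative, summing to 1. -/
def memP (d : ℕ) (x : Fin d → ℝ) : Prop :=
  (∀ i j : Fin d, i ≤ j → x j ≤ x i) ∧ (∀ i, 0 ≤ x i) ∧ (∑ i, x i) = 1

/-- Majorization `x ≺ y`: all partial sums of `x` bounded by those of `y`, equal total sum. -/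
def Maj (d : ℕ) (x y : Fin d → ℝ) : Prop :=
  (∀ k : ℕ, k < d → pfx d x k ≤ pfx d y k) ∧ pfx d x d = pfx d y d

/-- The meet `p ∧ q` of the majorization lattice, defined componentwise. -/
def meet (d : ℕ) (p q : Fin d → ℝ) : Fin d → ℝ :=
  fun i => min (pfx d p ((i : ℕ) + 1)) (pfx d q ((i : ℕ) + 1))
         - min (pfx d p (i : ℕ)) (pfx d q (i : ℕ))

lemma pfx_zero (d : ℕ) (x : Fin d → ℝ) : pfx d x 0 = 0 := by simp [pfx]

lemma pfx_succ (d : ℕ) (x : Fin d → ℝ) (k : ℕ) (hk : k < d) :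
    pfx d x (k + 1) = pfx d x k + x ⟨k, hk⟩ := by
  have : pfx d x (k+1) = ∑ i : Fin d, ((if (i:ℕ) < k then x i else 0)
      + (if i = ⟨k, hk⟩ then x i else 0)) := by
    unfold pfx
    apply Finset.sum_congr rfl
    intro i _
    rcases lt_trichotomy (i:ℕ) k with h | h | h
    · rw [if_pos (by omega), if_pos h, if_neg (by intro he; subst he; simp at h), add_zero]
    · rw [if_pos (by omega), if_neg (by omega), if_pos (Fin.ext h), zero_add]
    · rw [if_neg (by omega), if_neg (by omega), if_neg (by intro he; subst he; simp at h), add_zero]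
  rw [this, Finset.sum_add_distrib, Finset.sum_ite_eq' Finset.univ ⟨k, hk⟩ x]
  simp [pfx]

lemma pfx_mono (d : ℕ) (x : Fin d → ℝ) (hx : ∀ i, 0 ≤ x i) {k m : ℕ} (h : k ≤ m) :
    pfx d x k ≤ pfx d x m := by
  apply Finset.sum_le_sum
  intro i _
  split_ifs with h1 h2 h2
  · exact le_refl _
  · omega
  · exact hx i
  · exact le_refl _

lemma pfx_top (d : ℕ) (x : Fin d → ℝ) : pfx d x d = ∑ i, x i := by
  unfold pfx
  apply Finset.sum_congr rfl
  intro i _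
  rw [if_pos i.is_lt]

lemma pfx_meet (d : ℕ) (p q : Fin d → ℝ) :
    ∀ k, k ≤ d → pfx d (meet d p q) k = min (pfx d p k) (pfx d q k) := by
  intro k
  induction k with
  | zero => intro _; simp [pfx_zero]
  | succ k ih =>
    intro hk
    have hkd : k < d := by omega
    rw [pfx_succ d _ k hkd, ih (by omega)]
    show _ + meet d p q ⟨k, hkd⟩ = _
    unfold meet
    simp only
    ring

lemma concave_min (d : ℕ) (p q : Fin d → ℝ)
    (hp : memP d p) (hq : memP d q) (k : ℕ) (hk : k + 1 < d) :
    min (pfx d p (k+2)) (pfx d q (k+2)) + min (pfx d p k) (pfx d q k)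
      ≤ 2 * min (pfx d p (k+1)) (pfx d q (k+1)) := by
  have hk0 : k < d := by omega
  have hle : (⟨k, hk0⟩ : Fin d) ≤ ⟨k+1, hk⟩ := by
    simp [Fin.mk_le_mk]
  rcases le_total (pfx d p (k+1)) (pfx d q (k+1)) with h | h
  · rw [min_eq_left h]
    have e1 := pfx_succ d p k hk0
    have e2 := pfx_succ d p (k+1) hk
    have hm := hp.1 ⟨k, hk0⟩ ⟨k+1, hk⟩ hle
    have h1 : min (pfx d p (k+2)) (pfx d q (k+2)) ≤ pfx d p (k+2) := min_le_left _ _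
    have h2 : min (pfx d p k) (pfx d q k) ≤ pfx d p k := min_le_left _ _
    linarith
  · rw [min_eq_right h]
    have e1 := pfx_succ d q k hk0
    have e2 := pfx_succ d q (k+1) hk
    have hm := hq.1 ⟨k, hk0⟩ ⟨k+1, hk⟩ hle
    have h1 : min (pfx d p (k+2)) (pfx d q (k+2)) ≤ pfx d q (k+2) := min_le_right _ _
    have h2 : min (pfx d p k) (pfx d q k) ≤ pfx d q k := min_le_right _ _
    linarith

/-- the meet `p ∧ q` is the greatest lower bound of `{p, q}` in `(P_d, ≺)`:
it belongs to `P_d`, it is majorized by both `p` and `q`, and any `r ∈ P_d` majorized by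
both `p` and `q` is majorized by `p ∧ q`. -/
theorem meet_is_glb (d : ℕ) (hd : 1 ≤ d) (p q : Fin d → ℝ)
    (hp : memP d p) (hq : memP d q) :
    memP d (meet d p q) ∧
    Maj d (meet d p q) p ∧
    Maj d (meet d p q) q ∧
    (∀ r : Fin d → ℝ, memP d r → Maj d r p → Maj d r q → Maj d r (meet d p q)) := by
  have hptop : pfx d p d = 1 := by rw [pfx_top]; exact hp.2.2
  have hqtop : pfx d q d = 1 := by rw [pfx_top]; exact hq.2.2
  have hmtop : pfx d (meet d p q) d = 1 := by
    rw [pfx_meet d p q d le_rfl, hptop, hqtop, min_self]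
  -- adjacent monotonicity of the meet
  have hadj : ∀ k : ℕ, ∀ hk : k + 1 < d,
      meet d p q ⟨k+1, hk⟩ ≤ meet d p q ⟨k, by omega⟩ := by
    intro k hk
    have := concave_min d p q hp hq k hk
    unfold meet
    simp only
    have h2 : (k + 1 + 1 : ℕ) = k + 2 := by omega
    rw [h2]
    linarith
  -- full monotonicity
  have hmono : ∀ i j : Fin d, i ≤ j → meet d p q j ≤ meet d p q i := by
    have key : ∀ n a : ℕ, ∀ ha : a + n < d,
        meet d p q ⟨a + n, ha⟩ ≤ meet d p q ⟨a, by omega⟩ := by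
      intro n
      induction n with
      | zero => intro a ha; exact le_refl _
      | succ n ih =>
        intro a ha
        have h1 : a + n + 1 < d := by omega
        calc meet d p q ⟨a + (n+1), ha⟩ = meet d p q ⟨a + n + 1, h1⟩ := by
              rfl
          _ ≤ meet d p q ⟨a + n, by omega⟩ := hadj (a+n) h1
          _ ≤ meet d p q ⟨a, by omega⟩ := ih a (by omega)
    intro i j hij
    have hj : (i : ℕ) + ((j : ℕ) - (i : ℕ)) < d := by omega
    have := key ((j : ℕ) - (i : ℕ)) (i : ℕ) hj
    have hje : (⟨(i : ℕ) + ((j : ℕ) - (i : ℕ)), hj⟩ : Fin d) = j := by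
      apply Fin.ext; simp; omega
    have hie : (⟨(i : ℕ), by omega⟩ : Fin d) = i := by apply Fin.ext; simp
    rwa [hje, hie] at this
  have hnonneg : ∀ i : Fin d, 0 ≤ meet d p q i := by
    intro i
    unfold meet
    simp only [sub_nonneg]
    exact le_min
      (le_trans (min_le_left _ _) (pfx_mono d p hp.2.1 (Nat.le_succ _)))
      (le_trans (min_le_right _ _) (pfx_mono d q hq.2.1 (Nat.le_succ _)))
  refine ⟨⟨hmono, hnonneg, by rw [← pfx_top]; exact hmtop⟩, ?_, ?_, ?_⟩
  · exact ⟨fun k hk => by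
      rw [pfx_meet d p q k (le_of_lt hk)]; exact min_le_left _ _,
      by rw [hmtop, hptop]⟩
  · exact ⟨fun k hk => by
      rw [pfx_meet d p q k (le_of_lt hk)]; exact min_le_right _ _,
      by rw [hmtop, hqtop]⟩
  · intro r hr hrp hrq
    refine ⟨fun k hk => ?_, ?_⟩
    · rw [pfx_meet d p q k (le_of_lt hk)]
      exact le_min (hrp.1 k hk) (hrq.1 k hk)
    · rw [hmtop, hrp.2, hptop]

end
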